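/- arXiv:2109.13003 — 2 statements merged into one kernel-verified Lean document; each statement's English description precedes it below -/
import Mathlib

section
/- Let (Ω,𝓕) be a measurable space, S a Polish space, φ:Ω⇉S a weakly measurable correspondence with nonempty closed values, and K its graph. For every probability measure μ on Ω×S with μ(K)=1 there exists a stochastic kernel Q from Ω to S such that μ = μ^Ω ⊗ Q and Q(φ(ω)|ω)=1 for every ω∈Ω; moreover, Q is unique μ^Ω-almost surely. -/
/-!
Weak measurability makes `ω ↦ infDist s (φ ω)` measurable for every `s`; being also continuous
in `s`, the map `(ω, s) ↦ infDist s (φ ω)` is jointly measurable, and the graph `K` is its zero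
set. Picking, along a dense sequence, points ever closer to `φ ω` yields a measurable Cauchy
sequence whose limit is a measurable selection `f` of `φ` (Kuratowski–Ryll-Nardzewski).
Since `μ(K) = 1`, the conditional kernel of `μ` gives `φ ω` mass one for `μ^Ω`-a.e. `ω`;
replacing it by `δ_{f ω}` on the exceptional null set gives `Q`. Uniqueness is the a.e.
uniqueness of disintegrations.
-/

open MeasureTheory ProbabilityTheory Filter Topology

def WeaklyMeasurable {Ω S : Type*} [MeasurableSpace Ω] [TopologicalSpace S] (φ : Ω → Set S) :
    Prop :=
  ∀ U : Set S, IsOpen U → MeasurableSet {ω | (φ ω ∩ U).Nonempty}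

section

open Metric TopologicalSpace

variable {Ω S : Type*} [MeasurableSpace Ω]

theorem WeaklyMeasurable.measurable_infDist [PseudoMetricSpace S] {φ : Ω → Set S}
    (hφ : WeaklyMeasurable φ) (hne : ∀ ω, (φ ω).Nonempty) (s : S) :
    Measurable fun ω => infDist s (φ ω) := by
  refine measurable_of_Iio fun t => ?_
  have : (fun ω => infDist s (φ ω)) ⁻¹' Set.Iio t = {ω | (φ ω ∩ ball s t).Nonempty} := by
    ext ω
    simp only [Set.mem_preimage, Set.mem_Iio, infDist_lt_iff (hne ω), Set.mem_ofPred_eq,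
      Set.Nonempty, Set.mem_inter_iff, mem_ball']
  exact this ▸ hφ _ isOpen_ball

theorem WeaklyMeasurable.measurableSet_graph [TopologicalSpace S] [MetrizableSpace S]
    [SecondCountableTopology S] [MeasurableSpace S] [OpensMeasurableSpace S] {φ : Ω → Set S}
    (hφ : WeaklyMeasurable φ) (hne : ∀ ω, (φ ω).Nonempty) (hcl : ∀ ω, IsClosed (φ ω)) :
    MeasurableSet {p : Ω × S | p.2 ∈ φ p.1} := by
  let := metrizableSpaceMetric S
  have hmeas : Measurable fun p : Ω × S => infDist p.2 (φ p.1) :=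
    measurable_swap_iff.mp <| measurable_uncurry_of_continuous_of_measurable
      (fun ω => continuous_infDist_pt (φ ω)) (hφ.measurable_infDist hne)
  have hgraph : {p : Ω × S | p.2 ∈ φ p.1} = (fun p : Ω × S => infDist p.2 (φ p.1)) ⁻¹' {0} := by
    ext p
    exact (hcl p.1).mem_iff_infDist_zero (hne p.1)
  exact hgraph ▸ hmeas (measurableSet_singleton 0)

theorem exists_measurable_forall_mem_of_isOpen [TopologicalSpace S] [SeparableSpace S]
    [Nonempty S] [MeasurableSpace S] {p : Ω → S → Prop}
    (hopen : ∀ ω, IsOpen {s | p ω s}) (hne : ∀ ω, ∃ s, p ω s)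
    (hmeas : ∀ s, MeasurableSet {ω | p ω s}) :
    ∃ f : Ω → S, Measurable f ∧ ∀ ω, p ω (f ω) := by
  have hex : ∀ ω, ∃ k, p ω (denseSeq S k) := fun ω =>
    (denseRange_denseSeq S).exists_mem_open (hopen ω) (hne ω)
  classical
  exact ⟨fun ω => denseSeq S (Nat.find (hex ω)),
    measurable_from_nat.comp (measurable_find hex fun k => hmeas _),
    fun ω => Nat.find_spec (hex ω)⟩

theorem WeaklyMeasurable.exists_measurable_infDist_lt [PseudoMetricSpace S] [SeparableSpace S]
    [Nonempty S] [MeasurableSpace S] [OpensMeasurableSpace S] {φ : Ω → Set S}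
    (hφ : WeaklyMeasurable φ) (hne : ∀ ω, (φ ω).Nonempty) {u : Ω → S} (hu : Measurable u)
    {r r' : ℝ} (hr : ∀ ω, infDist (u ω) (φ ω) < r) (hr' : 0 < r') :
    ∃ v : Ω → S, Measurable v ∧ ∀ ω, infDist (v ω) (φ ω) < r' ∧ dist (u ω) (v ω) < r + r' := by
  refine exists_measurable_forall_mem_of_isOpen
    (p := fun ω s => infDist s (φ ω) < r' ∧ dist (u ω) s < r + r')
    (fun ω => ?_) (fun ω => ?_) (fun s => ?_)
  · exact (isOpen_lt (continuous_infDist_pt _) continuous_const).inter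
      (isOpen_lt (continuous_const.dist continuous_id) continuous_const)
  · obtain ⟨y, hy, hyu⟩ := (infDist_lt_iff (hne ω)).1 (hr ω)
    exact ⟨y, by rwa [infDist_zero_of_mem hy], by linarith⟩
  · exact (measurableSet_lt (hφ.measurable_infDist hne s) measurable_const).inter
      (measurableSet_lt (hu.dist measurable_const) measurable_const)

theorem WeaklyMeasurable.exists_seq_measurable_infDist_lt [PseudoMetricSpace S]
    [SeparableSpace S] [Nonempty S] [MeasurableSpace S] [OpensMeasurableSpace S] {φ : Ω → Set S}
    (hφ : WeaklyMeasurable φ) (hne : ∀ ω, (φ ω).Nonempty) :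
    ∃ u : ℕ → Ω → S, (∀ n, Measurable (u n)) ∧ (∀ n ω, infDist (u n ω) (φ ω) < (1 / 2) ^ n) ∧
      ∀ n ω, dist (u n ω) (u (n + 1) ω) ≤ 2 * (1 / 2) ^ n := by
  obtain ⟨u₀, hu₀, hu₀φ⟩ : ∃ u₀ : Ω → S, Measurable u₀ ∧ ∀ ω, infDist (u₀ ω) (φ ω) < 1 :=
    exists_measurable_forall_mem_of_isOpen (fun ω => isOpen_lt (continuous_infDist_pt _)
      continuous_const) (fun ω => ⟨_, (infDist_zero_of_mem (hne ω).some_mem).trans_lt one_pos⟩)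
      (fun s => measurableSet_lt (hφ.measurable_infDist hne s) measurable_const)
  choose! next hnext_meas hnext using fun (n : ℕ) (u : Ω → S) (hu : Measurable u)
    (hu' : ∀ ω, infDist (u ω) (φ ω) < (1 / 2) ^ n) =>
    hφ.exists_measurable_infDist_lt hne hu hu' (pow_pos one_half_pos (n + 1))
  let u : ℕ → Ω → S := fun n => Nat.rec u₀ next n
  have hu : ∀ n, Measurable (u n) ∧ ∀ ω, infDist (u n ω) (φ ω) < (1 / 2) ^ n := by
    intro n
    induction n with
    | zero => simpa using ⟨hu₀, hu₀φ⟩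
    | succ n ih => exact ⟨hnext_meas n _ ih.1 ih.2, fun ω => (hnext n _ ih.1 ih.2 ω).1⟩
  refine ⟨u, fun n => (hu n).1, fun n => (hu n).2, fun n ω => ?_⟩
  have h := (hnext n _ (hu n).1 (hu n).2 ω).2
  have : ((1 : ℝ) / 2) ^ (n + 1) ≤ (1 / 2) ^ n :=
    pow_le_pow_of_le_one (by norm_num) (by norm_num) n.le_succ
  exact h.le.trans (by linarith)

theorem WeaklyMeasurable.exists_measurable_selection [TopologicalSpace S] [PolishSpace S]
    [Nonempty S] [MeasurableSpace S] [BorelSpace S] {φ : Ω → Set S}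
    (hφ : WeaklyMeasurable φ) (hne : ∀ ω, (φ ω).Nonempty) (hcl : ∀ ω, IsClosed (φ ω)) :
    ∃ f : Ω → S, Measurable f ∧ ∀ ω, f ω ∈ φ ω := by
  let := upgradeIsCompletelyMetrizable S
  obtain ⟨u, hu, huφ, hudist⟩ := hφ.exists_seq_measurable_infDist_lt hne
  choose f hf using fun ω =>
    cauchySeq_tendsto_of_complete (cauchySeq_of_le_geometric (1 / 2) 2 (by norm_num)
      (fun n => hudist n ω))
  refine ⟨f, measurable_of_tendsto_metrizable hu (tendsto_pi_nhds.2 hf), fun ω => ?_⟩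
  have hlim : Tendsto (fun n => infDist (u n ω) (φ ω)) atTop (𝓝 0) :=
    squeeze_zero (fun n => infDist_nonneg) (fun n => (huφ n ω).le)
      (tendsto_pow_atTop_nhds_zero_of_lt_one (by norm_num) (by norm_num))
  rw [(hcl ω).mem_iff_infDist_zero (hne ω)]
  exact tendsto_nhds_unique (((continuous_infDist_pt _).tendsto _).comp (hf ω)) hlim

theorem MeasureTheory.Measure.ae_kernel_apply_prodMk_preimage_eq_one [MeasurableSpace S]
    {ν : Measure Ω} [IsProbabilityMeasure ν] {κ : Kernel Ω S} [IsMarkovKernel κ] {s : Set (Ω × S)}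
    (hs : MeasurableSet s) (h : (ν ⊗ₘ κ) s = 1) :
    ∀ᵐ ω ∂ν, κ ω (Prod.mk ω ⁻¹' s) = 1 := by
  filter_upwards [Measure.ae_ae_of_ae_compProd ((mem_ae_iff_prob_eq_one hs).2 h)] with ω hω
  exact (mem_ae_iff_prob_eq_one (measurable_prodMk_left hs)).1 hω

theorem ProbabilityTheory.Kernel.exists_isMarkovKernel_ae_eq_forall_apply_eq_one
    [MeasurableSpace S] (κ : Kernel Ω S) [IsMarkovKernel κ] {ν : Measure Ω} {φ : Ω → Set S}
    (hK : MeasurableSet {p : Ω × S | p.2 ∈ φ p.1}) {f : Ω → S} (hf : Measurable f)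
    (hfφ : ∀ ω, f ω ∈ φ ω) (hκ : ∀ᵐ ω ∂ν, κ ω (φ ω) = 1) :
    ∃ Q : Kernel Ω S, IsMarkovKernel Q ∧ Q =ᵐ[ν] κ ∧ ∀ ω, Q ω (φ ω) = 1 := by
  classical
  have hA : MeasurableSet {ω | κ ω (φ ω) = 1} :=
    Kernel.measurable_kernel_prodMk_left hK (measurableSet_singleton 1)
  refine ⟨Kernel.piecewise hA κ (Kernel.deterministic f hf), inferInstance, ?_, fun ω => ?_⟩
  · filter_upwards [hκ] with ω hω
    exact if_pos hω
  · rw [Kernel.piecewise_apply]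
    split_ifs with h
    · exact h
    · exact Measure.dirac_apply_of_mem (hfφ ω)

end

/-- disintegration lemma. Let `Ω` be a measurable space, `S` a Polish space,
`φ : Ω ⇉ S` a weakly measurable correspondence with nonempty closed values and graph `K`.
For every probability measure `μ` on `Ω × S` with `μ(K) = 1` there exists a stochastic kernel
`Q` from `Ω` to `S` with `μ = μ^Ω ⊗ Q` and `Q(φ(ω)|ω) = 1` for every `ω`; moreover `Q` is
unique `μ^Ω`-almost surely. -/
theorem stmt4 {Ω S : Type*} [MeasurableSpace Ω] [MeasurableSpace S]
    [TopologicalSpace S] [PolishSpace S] [BorelSpace S]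
    (φ : Ω → Set S)
    (hφmeas : ∀ U : Set S, IsOpen U → MeasurableSet {ω | (φ ω ∩ U).Nonempty})
    (hφne : ∀ ω, (φ ω).Nonempty)
    (hφcl : ∀ ω, IsClosed (φ ω))
    (μ : Measure (Ω × S)) [IsProbabilityMeasure μ]
    (hK : μ {p : Ω × S | p.2 ∈ φ p.1} = 1) :
    ∃ Q : Kernel Ω S, IsMarkovKernel Q ∧
      μ = (μ.map Prod.fst) ⊗ₘ Q ∧
      (∀ ω, Q ω (φ ω) = 1) ∧
      (∀ Q' : Kernel Ω S, IsMarkovKernel Q' → μ = (μ.map Prod.fst) ⊗ₘ Q' →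
        ∀ᵐ ω ∂(μ.map Prod.fst), Q ω = Q' ω) := by
  have : Nonempty S := ⟨μ.nonempty_of_neZero.some.2⟩
  have hφ : WeaklyMeasurable φ := hφmeas
  have hKmeas := hφ.measurableSet_graph hφne hφcl
  obtain ⟨f, hf, hfφ⟩ := hφ.exists_measurable_selection hφne hφcl
  have hκφ : ∀ᵐ ω ∂μ.fst, μ.condKernel ω (φ ω) = 1 :=
    Measure.ae_kernel_apply_prodMk_preimage_eq_one hKmeas (by rwa [μ.disintegrate])
  obtain ⟨Q, hQ, hQκ, hQφ⟩ :=
    μ.condKernel.exists_isMarkovKernel_ae_eq_forall_apply_eq_one hKmeas hf hfφ hκφ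
  refine ⟨Q, hQ, ?_, hQφ, fun Q' _ hμQ' => ?_⟩
  · rw [← Measure.fst, Measure.compProd_congr hQκ]
    exact (μ.disintegrate μ.condKernel).symm
  · filter_upwards [hQκ, eq_condKernel_of_measure_eq_compProd Q' hμQ'] with ω hQω hQ'ω
    rw [hQω, hQ'ω]
end

section
/- In a discounted Markov game with state space X, compact action spaces A₁,A₂, transition kernel Q, discount β∈(0,1) and initial distribution η, the occupation measure μ_{η,π₁,π₂} of any pair of history-dependent policies (π₁,π₂) satisfies μ(K)=1 and the linear equation μ^X = (1−β)η + β μQ, where μ^X is the X-marginal, μQ(D)=∫ Q(D|x,a₁,a₂)μ(dx,da₁,da₂), and K is the graph of the feasible-action correspondence x ↦ A₁(x)×A₂(x). -/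
open MeasureTheory ProbabilityTheory Filter Topology
open scoped NNReal ENNReal

universe u

/-- The space of histories `H_t = (X × A₁ × A₂)^t × X`, built recursively:
`H_0 = X` and `H_{t+1} = H_t × (A₁ × A₂) × X`. -/
def Hist (X A₁ A₂ : Type u) : ℕ → Type u
  | 0 => X
  | t + 1 => Hist X A₁ A₂ t × (A₁ × A₂) × X

noncomputable instance histMeasurableSpace {X A₁ A₂ : Type u} [MeasurableSpace X]
    [MeasurableSpace A₁] [MeasurableSpace A₂] :
    ∀ t, MeasurableSpace (Hist X A₁ A₂ t)
  | 0 => ‹MeasurableSpace X›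
  | t + 1 =>
    letI := histMeasurableSpace (X := X) (A₁ := A₁) (A₂ := A₂) t
    inferInstanceAs (MeasurableSpace (Hist X A₁ A₂ t × (A₁ × A₂) × X))

/-- The current state `x_t` of a history `h_t ∈ H_t`. -/
def curState {X A₁ A₂ : Type u} : ∀ t, Hist X A₁ A₂ t → X
  | 0 => id
  | _ + 1 => fun h => h.2.2

lemma measurable_curState {X A₁ A₂ : Type u} [MeasurableSpace X]
    [MeasurableSpace A₁] [MeasurableSpace A₂] :
    ∀ t, Measurable (curState (X := X) (A₁ := A₁) (A₂ := A₂) t)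
  | 0 => measurable_id
  | _ + 1 => measurable_snd.comp measurable_snd

/-- The distribution on histories `H_t` induced by the initial distribution `η`, the
transition kernel `Q` and the history-dependent policies `(π₁, π₂)`: the initial state has
distribution `η`, at each stage the actions are drawn independently from `π₁^t(·|h_t)` and
`π₂^t(·|h_t)`, and the next state from `Q(·|x_t, a_t, b_t)`. -/
noncomputable def traj {X A₁ A₂ : Type u} [MeasurableSpace X]
    [MeasurableSpace A₁] [MeasurableSpace A₂]
    (η : Measure X) (Q : Kernel (X × A₁ × A₂) X)
    (π₁ : ∀ t, Kernel (Hist X A₁ A₂ t) A₁) (π₂ : ∀ t, Kernel (Hist X A₁ A₂ t) A₂) :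
    ∀ t, Measure (Hist X A₁ A₂ t)
  | 0 => η
  | t + 1 =>
    (traj η Q π₁ π₂ t) ⊗ₘ
      ((π₁ t ×ₖ π₂ t) ⊗ₖ
        (Q.comap (fun p : Hist X A₁ A₂ t × (A₁ × A₂) => (curState t p.1, p.2))
          (((measurable_curState t).comp measurable_fst).prodMk measurable_snd)))

/-- The joint law of the state-action triple `(X_t, A_t, B_t)` at time `t`. -/
noncomputable def stepLaw {X A₁ A₂ : Type u} [MeasurableSpace X]
    [MeasurableSpace A₁] [MeasurableSpace A₂]
    (η : Measure X) (Q : Kernel (X × A₁ × A₂) X)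
    (π₁ : ∀ t, Kernel (Hist X A₁ A₂ t) A₁) (π₂ : ∀ t, Kernel (Hist X A₁ A₂ t) A₂)
    (t : ℕ) : Measure (X × A₁ × A₂) :=
  (traj η Q π₁ π₂ (t + 1)).map
    (fun h : Hist X A₁ A₂ t × (A₁ × A₂) × X => (curState t h.1, h.2.1))

/-- The occupation measure of the pair of history-dependent policies `(π₁, π₂)` with initial
distribution `η`: `μ_{η,π₁,π₂} = (1-β) ∑_t β^t law(X_t, A_t, B_t)`. -/
noncomputable def occHD {X A₁ A₂ : Type u} [MeasurableSpace X]
    [MeasurableSpace A₁] [MeasurableSpace A₂]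
    (β : ℝ≥0) (η : Measure X) (Q : Kernel (X × A₁ × A₂) X)
    (π₁ : ∀ t, Kernel (Hist X A₁ A₂ t) A₁) (π₂ : ∀ t, Kernel (Hist X A₁ A₂ t) A₂) :
    Measure (X × A₁ × A₂) :=
  Measure.sum fun t : ℕ => ((1 - β) * β ^ t) • stepLaw η Q π₁ π₂ t

/-!
Let `ν_t` be the law of the state `X_t` and `λ_t` that of `(X_t, A_t, B_t)`. Since `(A_t, B_t)` is
drawn from `π₁^t ⊗ π₂^t` given the history and `X_{t+1}` from `Q` given `(X_t, A_t, B_t)`, the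
marginal of `λ_t` on `X` is `ν_t` and `λ_t Q = ν_{t+1}`, while `ν_0 = η`. Summing with weights
`(1-β)β^t` and splitting off the term `t = 0` gives `μ^X = (1-β)η + βμQ`. The graph `K` has full
`λ_t`-measure because every section `A₁(x) × A₂(x)` has full mass under the product of the
policies, and the weights add up to `1`.
-/

namespace MeasureTheory.Measure

variable {α β : Type*} {mα : MeasurableSpace α} {mβ : MeasurableSpace β}

lemma compProd_apply_eq_one {μ : Measure α} [IsProbabilityMeasure μ] {κ : Kernel α β}
    [IsMarkovKernel κ] {s : Set (α × β)} (hs : ∀ a, κ a (Prod.mk a ⁻¹' s) = 1) :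
    (μ ⊗ₘ κ) s = 1 := by
  refine le_antisymm prob_le_one ?_
  rw [← measure_toMeasurable s, compProd_apply (measurableSet_toMeasurable _ _)]
  calc (1 : ℝ≥0∞) = ∫⁻ _, 1 ∂μ := by simp
    _ ≤ _ := lintegral_mono fun a =>
      (hs a).ge.trans (measure_mono (Set.preimage_mono (subset_toMeasurable _ _)))

lemma sum_geometric_smul_eq (β : ℝ≥0) (ν : ℕ → Measure α) :
    sum (fun t => ((1 - β) * β ^ t) • ν t)
      = (1 - β) • ν 0 + β • sum (fun t => ((1 - β) * β ^ t) • ν (t + 1)) := by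
  ext s hs
  simp only [add_apply, smul_apply, sum_apply _ hs, ENNReal.smul_def, smul_eq_mul]
  rw [tsum_eq_zero_add' ENNReal.summable, ← ENNReal.tsum_mul_left]
  congr 1
  · simp
  · exact tsum_congr fun t => by push_cast; ring

end MeasureTheory.Measure

attribute [fun_prop] measurable_curState

section MarkovGame

variable {X A₁ A₂ : Type u} [MeasurableSpace X] [MeasurableSpace A₁] [MeasurableSpace A₂]

noncomputable def stateLaw (η : Measure X) (Q : Kernel (X × A₁ × A₂) X)
    (π₁ : ∀ t, Kernel (Hist X A₁ A₂ t) A₁) (π₂ : ∀ t, Kernel (Hist X A₁ A₂ t) A₂)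
    (t : ℕ) : Measure X :=
  (traj η Q π₁ π₂ t).map (curState t)

variable {η : Measure X} {Q : Kernel (X × A₁ × A₂) X}
  {π₁ : ∀ t, Kernel (Hist X A₁ A₂ t) A₁} {π₂ : ∀ t, Kernel (Hist X A₁ A₂ t) A₂}

lemma stateLaw_zero : stateLaw η Q π₁ π₂ 0 = η := Measure.map_id

lemma occHD_apply_eq_one {β : ℝ≥0} (hβ : β < 1) {s : Set (X × A₁ × A₂)}
    (hs : ∀ t, stepLaw η Q π₁ π₂ t s = 1) : occHD β η Q π₁ π₂ s = 1 := by
  rw [occHD, Measure.sum_apply_of_countable]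
  simp only [Measure.smul_apply, hs, ENNReal.smul_def, smul_eq_mul, mul_one]
  rw [← ENNReal.coe_tsum ((NNReal.summable_geometric hβ).mul_left _), NNReal.tsum_mul_left,
    NNReal.tsum_geometric hβ, mul_inv_cancel₀ (tsub_pos_of_lt hβ).ne', ENNReal.coe_one]

variable [IsProbabilityMeasure η] [IsMarkovKernel Q] [∀ t, IsMarkovKernel (π₁ t)]
  [∀ t, IsMarkovKernel (π₂ t)]

instance isProbabilityMeasure_traj : ∀ t, IsProbabilityMeasure (traj η Q π₁ π₂ t)
  | 0 => ‹_›
  | t + 1 => by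
    have := isProbabilityMeasure_traj t
    show IsProbabilityMeasure (traj η Q π₁ π₂ t ⊗ₘ _)
    infer_instance

lemma stepLaw_eq_map_compProd (t : ℕ) :
    stepLaw η Q π₁ π₂ t
      = (traj η Q π₁ π₂ t ⊗ₘ (π₁ t ×ₖ π₂ t)).map (Prod.map (curState t) id) := by
  rw [← Kernel.fst_compProd (π₁ t ×ₖ π₂ t) (Q.comap _ _), Kernel.fst_eq,
    Measure.compProd_map measurable_fst, Measure.map_map (by fun_prop) (by fun_prop)]
  rfl

lemma map_fst_stepLaw (t : ℕ) : (stepLaw η Q π₁ π₂ t).map Prod.fst = stateLaw η Q π₁ π₂ t := by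
  rw [stepLaw_eq_map_compProd, Measure.map_map measurable_fst (by fun_prop),
    Prod.map_fst', ← Measure.map_map (by fun_prop) measurable_fst, ← Measure.fst,
    Measure.fst_compProd, stateLaw]

lemma comp_stepLaw (t : ℕ) : Q ∘ₘ stepLaw η Q π₁ π₂ t = stateLaw η Q π₁ π₂ (t + 1) := by
  rw [stepLaw_eq_map_compProd, ← Measure.deterministic_comp_eq_map (by fun_prop),
    Measure.comp_assoc, Kernel.comp_deterministic_eq_comap, ← Measure.snd_compProd, Measure.snd,
    ← Measure.compProd_assoc, Measure.map_map measurable_snd (by fun_prop)]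
  rfl

lemma stepLaw_apply_feasible_eq_one {Fa₁ : X → Set A₁} {Fa₂ : X → Set A₂}
    (hfeas₁ : ∀ t h, π₁ t h (Fa₁ (curState t h)) = 1)
    (hfeas₂ : ∀ t h, π₂ t h (Fa₂ (curState t h)) = 1) (t : ℕ) :
    stepLaw η Q π₁ π₂ t {q | q.2.1 ∈ Fa₁ q.1 ∧ q.2.2 ∈ Fa₂ q.1} = 1 := by
  rw [stepLaw_eq_map_compProd]
  refine le_antisymm prob_le_one ?_
  refine (Measure.compProd_apply_eq_one fun h => ?_).ge.trans
    (Measure.le_map_apply (by fun_prop) _)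
  change (π₁ t ×ₖ π₂ t) h (Fa₁ (curState t h) ×ˢ Fa₂ (curState t h)) = 1
  rw [Kernel.prod_apply, Measure.prod_prod, hfeas₁, hfeas₂, mul_one]

lemma map_fst_occHD (β : ℝ≥0) :
    (occHD β η Q π₁ π₂).map Prod.fst
      = Measure.sum fun t => ((1 - β) * β ^ t) • stateLaw η Q π₁ π₂ t := by
  simp only [occHD, Measure.map_sum measurable_fst.aemeasurable, Measure.map_smul, map_fst_stepLaw]

lemma comp_occHD (β : ℝ≥0) :
    Q ∘ₘ occHD β η Q π₁ π₂
      = Measure.sum fun t => ((1 - β) * β ^ t) • stateLaw η Q π₁ π₂ (t + 1) := by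
  simp only [occHD, Measure.bind_sum _ _ Q.aemeasurable, Measure.bind_smul, comp_stepLaw]

end MarkovGame

theorem stmt6_general {X A₁ A₂ : Type u} [MeasurableSpace X] [MeasurableSpace A₁] [MeasurableSpace A₂]
    (β : ℝ≥0) (hβ1 : β < 1)
    (η : Measure X) [IsProbabilityMeasure η]
    (Q : Kernel (X × A₁ × A₂) X) [IsMarkovKernel Q]
    -- feasible-action correspondences
    (Fa₁ : X → Set A₁) (Fa₂ : X → Set A₂)
    -- history-dependent policies of the two players
    (π₁ : ∀ t, Kernel (Hist X A₁ A₂ t) A₁) (π₂ : ∀ t, Kernel (Hist X A₁ A₂ t) A₂)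
    (hm₁ : ∀ t, IsMarkovKernel (π₁ t)) (hm₂ : ∀ t, IsMarkovKernel (π₂ t))
    (hfeas₁ : ∀ t h, π₁ t h (Fa₁ (curState t h)) = 1)
    (hfeas₂ : ∀ t h, π₂ t h (Fa₂ (curState t h)) = 1) :
    occHD β η Q π₁ π₂ {q : X × A₁ × A₂ | q.2.1 ∈ Fa₁ q.1 ∧ q.2.2 ∈ Fa₂ q.1} = 1 ∧
    (occHD β η Q π₁ π₂).map Prod.fst
      = (1 - β) • η + β • (occHD β η Q π₁ π₂).bind (fun q => Q q) := by
  refine ⟨occHD_apply_eq_one hβ1 (stepLaw_apply_feasible_eq_one hfeas₁ hfeas₂), ?_⟩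
  rw [map_fst_occHD, Measure.sum_geometric_smul_eq, stateLaw_zero, ← comp_occHD]

/-- In the discounted Markov game, the occupation measure `μ_{η,π₁,π₂}` of
any pair of (feasible) history-dependent policies is carried by the graph `K` of the
feasible-action correspondence and satisfies the linear equation
`μ^X = (1-β) η + β μQ`. -/
theorem stmt6 {X A₁ A₂ : Type u} [MeasurableSpace X]
    [MetricSpace A₁] [CompactSpace A₁] [MeasurableSpace A₁] [BorelSpace A₁]
    [MetricSpace A₂] [CompactSpace A₂] [MeasurableSpace A₂] [BorelSpace A₂]
    (β : ℝ≥0) (hβ0 : 0 < β) (hβ1 : β < 1)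
    (η : Measure X) [IsProbabilityMeasure η]
    (Q : Kernel (X × A₁ × A₂) X) [IsMarkovKernel Q]
    -- feasible-action correspondences
    (Fa₁ : X → Set A₁) (Fa₂ : X → Set A₂)
    (hFa₁meas : ∀ U : Set A₁, IsOpen U → MeasurableSet {x | (Fa₁ x ∩ U).Nonempty})
    (hFa₂meas : ∀ U : Set A₂, IsOpen U → MeasurableSet {x | (Fa₂ x ∩ U).Nonempty})
    (hFa₁ne : ∀ x, (Fa₁ x).Nonempty) (hFa₂ne : ∀ x, (Fa₂ x).Nonempty)
    (hFa₁cpt : ∀ x, IsCompact (Fa₁ x)) (hFa₂cpt : ∀ x, IsCompact (Fa₂ x))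
    -- history-dependent policies of the two players
    (π₁ : ∀ t, Kernel (Hist X A₁ A₂ t) A₁) (π₂ : ∀ t, Kernel (Hist X A₁ A₂ t) A₂)
    (hm₁ : ∀ t, IsMarkovKernel (π₁ t)) (hm₂ : ∀ t, IsMarkovKernel (π₂ t))
    (hfeas₁ : ∀ t h, π₁ t h (Fa₁ (curState t h)) = 1)
    (hfeas₂ : ∀ t h, π₂ t h (Fa₂ (curState t h)) = 1) :
    occHD β η Q π₁ π₂ {q : X × A₁ × A₂ | q.2.1 ∈ Fa₁ q.1 ∧ q.2.2 ∈ Fa₂ q.1} = 1 ∧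
    (occHD β η Q π₁ π₂).map Prod.fst
      = (1 - β) • η + β • (occHD β η Q π₁ π₂).bind (fun q => Q q) :=
  stmt6_general β hβ1 η Q Fa₁ Fa₂ π₁ π₂ hm₁ hm₂ hfeas₁ hfeas₂
end
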